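/- arXiv:1310.3951 — 7 statements merged into one kernel-verified Lean document; each statement's English description precedes it below -/
import Mathlib

section
/- Let A be an integrally closed domain with fraction field Q containing a root of T^4 + 4, let 0 ≠ a ∈ A and n ≥ 1 with char Q ∤ n. If T^d − a has no root in A for every divisor d > 1 of n, then A[T]/(T^n − a) is an integral domain with fraction field Q[T]/(T^n − a). -/
/-!
Capelli's theorem for binomials: over a field containing `√-1` (here `y² / 2` for a root `y` of
`T⁴ + 4`, or `1` in characteristic `2`), `Tⁿ - a` is irreducible as soon as `a` is not a `p`-th
power for any prime `p ∣ n`. Since `A` is integrally closed, a `p`-th root of `a` in `Q` already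
lies in `A`, so `Tⁿ - a` is irreducible over `Q`. Finally, `Tⁿ - a` is monic, so `A[T]/(Tⁿ - a)`
embeds into the field `Q[T]/(Tⁿ - a)`, and clearing denominators shows that this field is its
fraction field.
-/

open Polynomial

theorem exists_sq_eq_neg_one_of_pow_four_eq_neg_four {K : Type*} [Field K] {y : K}
    (hy : y ^ 4 = -4) : ∃ i : K, i ^ 2 = -1 := by
  by_cases h2 : (2 : K) = 0
  · exact ⟨1, by linear_combination h2⟩
  · exact ⟨y ^ 2 / 2, by field_simp; linear_combination hy⟩

theorem exists_pow_eq_of_pow_eq_neg {K : Type*} [CommRing K] {i c a : K} (hi : i ^ 2 = -1)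
    {q : ℕ} (hq : q.Prime) (hc : c ^ q = -a) : ∃ b : K, b ^ q = a := by
  rcases hq.eq_two_or_odd' with rfl | hodd
  · exact ⟨i * c, by linear_combination c ^ 2 * hi - hc⟩
  · exact ⟨-c, by rw [hodd.neg_pow, hc, neg_neg]⟩

theorem X_pow_sub_C_irreducible_of_exists_sq_eq_neg_one {K : Type*} [Field K]
    (hi : ∃ i : K, i ^ 2 = -1) {n : ℕ} (hn : n ≠ 0) {a : K}
    (ha : ∀ p : ℕ, p.Prime → p ∣ n → ∀ b : K, b ^ p ≠ a) :
    Irreducible (X ^ n - C a) := by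
  induction n using induction_on_primes generalizing K a with
  | zero => exact absurd rfl hn
  | one => simpa using irreducible_X_sub_C a
  | prime_mul p m hp IH =>
    obtain ⟨i, hi⟩ := hi
    rw [mul_comm]
    apply X_pow_mul_sub_C_irreducible
      (X_pow_sub_C_irreducible_of_prime hp (ha p hp (dvd_mul_right _ _)))
    intro E _ _ x hx
    have hint : IsIntegral K x := not_not.mp fun h ↦ by
      simpa only [degree_zero, degree_X_pow_sub_C hp.pos,
        WithBot.natCast_ne_bot] using congr_arg degree (hx.symm.trans (dif_neg h))
    refine IH ⟨algebraMap K _ i, by rw [← map_pow, hi, map_neg, map_one]⟩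
      (right_ne_zero_of_mul hn) fun q hq hqm b hb ↦ ?_
    -- The norm of `x` is `(-1) ^ (p + 1) * a`, so a `q`-th root of `x` has a norm whose
    -- `q`-th power is `± a`; with `√-1` at hand, both signs give a `q`-th root of `a` in `K`.
    have hnorm : Algebra.norm K b ^ q = (-1) ^ (p + 1) * a := by
      rw [← map_pow, hb, ← IntermediateField.adjoin.powerBasis_gen hint,
        Algebra.PowerBasis.norm_gen_eq_coeff_zero_minpoly]
      simp [IntermediateField.minpoly_gen, hx, hp.ne_zero.symm, pow_succ]
    have hdvd : q ∣ p * m := dvd_mul_of_dvd_right hqm p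
    rcases neg_one_pow_eq_or K (p + 1) with h | h <;> rw [h] at hnorm
    · exact ha q hq hdvd _ (by rw [hnorm, one_mul])
    · obtain ⟨c, hc⟩ := exists_pow_eq_of_pow_eq_neg hi hq (by rw [hnorm, neg_one_mul])
      exact ha q hq hdvd c hc

theorem IsIntegrallyClosed.exists_algebraMap_eq_of_pow_eq {A K : Type*} [CommRing A]
    [CommRing K] [Algebra A K] [IsFractionRing A K] [IsIntegrallyClosed A] {b : K} {a : A}
    {p : ℕ} (hp : 0 < p) (hb : b ^ p = algebraMap A K a) : ∃ x : A, algebraMap A K x = b :=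
  exists_algebraMap_eq_of_isIntegral_pow hp (hb ▸ isIntegral_algebraMap)

namespace AdjoinRoot

theorem map_mk {R S : Type*} [CommRing R] [CommRing S] (f : R →+* S) (p : R[X]) (q : S[X])
    (h : q ∣ p.map f) (g : R[X]) : map f p q h (mk p g) = mk q (g.map f) := by
  rw [map, lift_mk, ← eval₂_map, ← algebraMap_eq, ← aeval_def, aeval_eq]

theorem map_injective_of_monic {R S : Type*} [CommRing R] [CommRing S] {f : R →+* S}
    (hf : Function.Injective f) {p : R[X]} (hp : p.Monic) :
    Function.Injective (map f p (p.map f) dvd_rfl) := by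
  refine (injective_iff_map_eq_zero _).mpr fun z hz ↦ ?_
  obtain ⟨g, rfl⟩ := mk_surjective z
  rwa [map_mk, mk_eq_zero, map_dvd_map f hf hp, ← mk_eq_zero] at hz

theorem isDomain_of_irreducible_map {R K : Type*} [CommRing R] [Field K] {f : R →+* K}
    (hf : Function.Injective f) {p : R[X]} (hp : p.Monic) (hirr : Irreducible (p.map f)) :
    IsDomain (AdjoinRoot p) :=
  have := Fact.mk hirr
  (map_injective_of_monic hf hp).isDomain _

theorem nonempty_fractionRing_equiv_map {A K : Type*} [CommRing A] [IsDomain A] [Field K]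
    [Algebra A K] [IsFractionRing A K] {p : A[X]} (hp : p.Monic)
    (hirr : Irreducible (p.map (algebraMap A K))) :
    Nonempty (FractionRing (AdjoinRoot p) ≃+* AdjoinRoot (p.map (algebraMap A K))) := by
  have := Fact.mk hirr
  have := isDomain_of_irreducible_map (IsFractionRing.injective A K) hp hirr
  let φ := map (algebraMap A K) p (p.map (algebraMap A K)) dvd_rfl
  let := φ.toAlgebra
  have : FaithfulSMul (AdjoinRoot p) (AdjoinRoot (p.map (algebraMap A K))) :=
    (faithfulSMul_iff_algebraMap_injective _ _).mpr
      (map_injective_of_monic (IsFractionRing.injective A K) hp)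
  have : IsFractionRing (AdjoinRoot p) (AdjoinRoot (p.map (algebraMap A K))) := by
    refine IsFractionRing.of_field _ _ fun z ↦ ?_
    obtain ⟨g, rfl⟩ := mk_surjective z
    obtain ⟨c, hc, hcg⟩ := IsLocalization.integerNormalization_spec (nonZeroDivisors A) g
    refine ⟨mk p (IsLocalization.integerNormalization (nonZeroDivisors A) g), of p c, ?_⟩
    have hc0 : algebraMap A K c ≠ 0 :=
      IsFractionRing.to_map_ne_zero_of_mem_nonZeroDivisors hc
    change _ = φ _ / φ _
    rw [map_mk, hcg, map_of, algebra_compatible_smul K, Polynomial.smul_eq_C_mul, map_mul, mk_C,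
      mul_div_cancel_left₀ _ ((_root_.map_ne_zero _).mpr hc0)]
  exact ⟨(IsLocalization.algEquiv (nonZeroDivisors (AdjoinRoot p)) _ _).toRingEquiv⟩

end AdjoinRoot

theorem stmt_5_general (A Q : Type*) [CommRing A] [IsDomain A] [Field Q] [Algebra A Q]
    [IsFractionRing A Q] [IsIntegrallyClosed A]
    (hy : ∃ y : Q, y ^ 4 = -4)
    (a : A) (n : ℕ) (hn : 0 < n)
    (hroot : ∀ d : ℕ, 1 < d → d ∣ n → ¬ ∃ x : A, x ^ d = a) :
    IsDomain (AdjoinRoot (X ^ n - C a)) ∧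
      Nonempty (FractionRing (AdjoinRoot (X ^ n - C a)) ≃+*
        AdjoinRoot (X ^ n - C (algebraMap A Q a))) := by
  obtain ⟨y, hy⟩ := hy
  have hirr : Irreducible (X ^ n - C (algebraMap A Q a)) := by
    refine X_pow_sub_C_irreducible_of_exists_sq_eq_neg_one
      (exists_sq_eq_neg_one_of_pow_four_eq_neg_four hy) hn.ne' fun p hp hpn b hb ↦ ?_
    obtain ⟨x, rfl⟩ := IsIntegrallyClosed.exists_algebraMap_eq_of_pow_eq hp.pos hb
    exact hroot p hp.one_lt hpn ⟨x, IsFractionRing.injective A Q (by rwa [map_pow])⟩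
  have hmap : (X ^ n - C a).map (algebraMap A Q) = X ^ n - C (algebraMap A Q a) := by simp
  rw [← hmap] at hirr ⊢
  have hmonic := monic_X_pow_sub_C a hn.ne'
  exact ⟨AdjoinRoot.isDomain_of_irreducible_map (IsFractionRing.injective A Q) hmonic hirr,
    AdjoinRoot.nonempty_fractionRing_equiv_map hmonic hirr⟩

/-- Let `A` be an integrally closed domain with fraction field `Q` containing a root of
`T⁴ + 4`, `0 ≠ a ∈ A`, `n ≥ 1` with `char Q ∤ n`. If `T^d - a` has no root in `A` for every
divisor `d > 1` of `n`, then `A[T]/(Tⁿ - a)` is an integral domain with fraction field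
`Q[T]/(Tⁿ - a)`. -/
theorem stmt_5 (A Q : Type*) [CommRing A] [IsDomain A] [Field Q] [Algebra A Q]
    [IsFractionRing A Q] [IsIntegrallyClosed A]
    (hy : ∃ y : Q, y ^ 4 = -4)
    (a : A) (ha : a ≠ 0) (n : ℕ) (hn : 0 < n) (hchar : ¬ (ringChar Q ∣ n))
    (hroot : ∀ d : ℕ, 1 < d → d ∣ n → ¬ ∃ x : A, x ^ d = a) :
    IsDomain (AdjoinRoot (X ^ n - C a)) ∧
      Nonempty (FractionRing (AdjoinRoot (X ^ n - C a)) ≃+*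
        AdjoinRoot (X ^ n - C (algebraMap A Q a))) :=
  stmt_5_general A Q hy a n hn hroot
end

section
/- Let K be a field with char K ∤ n, containing μ_n(K) and a root of T^4 + 4. Let f ∈ K×, and let d be the maximal divisor of n such that T^d − f has a root g in K, with n = d·n'. Then T^n − f = ∏_{ζ ∈ μ_d(K)} (T^{n'} − ζg) is the factorization of T^n − f into distinct irreducible factors in K[T]. -/
/-!
Substituting `X ^ n'` into `X ^ d - f = ∏_{ζ ∈ μ_d} (X - ζ g)` gives the factorization, whose
factors are distinct because `g ≠ 0`.

For irreducibility we use the primitive `n'`-th root of unity in `K`. If `α ^ m = a ≠ 0` in an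
algebraic closure and `K` contains a primitive `m`-th root of unity, every conjugate of `α` is `α`
times a root of unity of `K`, so the constant term of the minimal polynomial of `α` shows
`α ^ r ∈ K`, where `r` is its degree. With `α ^ m = a` this gives `α ^ gcd(r, m) ∈ K`, so either
`m ∣ r`, i.e. `X ^ m - a` is the minimal polynomial, or `a` is a `p`-th power for a prime `p ∣ m`.
For `a = ζ g` and `m = n'`, a `p`-th root of `ζ g` would be a `p d`-th root of `f`, contradicting
the maximality of `d`.
-/

open Polynomial

theorem Subfield.pow_gcd_mem {L : Type*} [Field L] (S : Subfield L) {x : L} (hx : x ≠ 0)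
    {r m : ℕ} (hr : x ^ r ∈ S) (hm : x ^ m ∈ S) : x ^ Nat.gcd r m ∈ S := by
  have hbezout : x ^ Nat.gcd r m = (x ^ r) ^ Nat.gcdA r m * (x ^ m) ^ Nat.gcdB r m := by
    rw [← zpow_natCast, Nat.gcd_eq_gcd_ab, zpow_add₀ hx, zpow_mul, zpow_mul, zpow_natCast,
      zpow_natCast]
  rw [hbezout]
  exact mul_mem (zpow_mem hr _) (zpow_mem hm _)

theorem exists_prime_dvd_pow_eq_of_pow_eq {M : Type*} [Monoid M] {b a : M} {k : ℕ} (hk : k ≠ 1)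
    (hb : b ^ k = a) : ∃ p, p.Prime ∧ p ∣ k ∧ ∃ c : M, c ^ p = a := by
  obtain ⟨p, hp, s, rfl⟩ := Nat.exists_prime_and_dvd hk
  exact ⟨p, hp, dvd_mul_right p s, b ^ s, by rw [← pow_mul, mul_comm, hb]⟩

section RootsOfUnity

variable {K L : Type*} [Field K] [Field L] [Algebra K L] {m : ℕ} [NeZero m] {ζ : K}

theorem IsPrimitiveRoot.exists_eq_algebraMap_mul_of_pow_eq (hζ : IsPrimitiveRoot ζ m)
    {α β : L} (hα : α ≠ 0) (hβ : β ^ m = α ^ m) :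
    ∃ w : K, w ≠ 0 ∧ β = algebraMap K L w * α := by
  obtain ⟨i, -, hi⟩ := (hζ.map_of_injective (algebraMap K L).injective).eq_pow_of_pow_eq_one
    (show (β / α) ^ m = 1 by rw [div_pow, hβ, div_self (pow_ne_zero _ hα)])
  exact ⟨ζ ^ i, pow_ne_zero _ (hζ.ne_zero (NeZero.ne m)),
    by rw [map_pow, hi, div_mul_cancel₀ _ hα]⟩

theorem IsPrimitiveRoot.pow_natDegree_minpoly_mem_fieldRange [IsAlgClosed L]
    (hζ : IsPrimitiveRoot ζ m) {a : K} {α : L} (hα : α ^ m = algebraMap K L a) (hα0 : α ≠ 0) :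
    α ^ (minpoly K α).natDegree ∈ (algebraMap K L).fieldRange := by
  have hroot : aeval α (X ^ m - C a) = 0 := by simp [hα]
  have hmonic : (minpoly K α).Monic :=
    minpoly.monic ⟨_, monic_X_pow_sub_C a (NeZero.ne m), hroot⟩
  set q := minpoly K α
  set s := (q.map (algebraMap K L)).roots
  have hsplit : (q.map (algebraMap K L)).Splits := IsAlgClosed.splits _
  have hconj : ∀ β ∈ s, ∃ w : K, w ≠ 0 ∧ β = algebraMap K L w * α := by
    intro β hβ
    have hβ' := (isRoot_of_mem_roots hβ).dvd (Polynomial.map_dvd _ (minpoly.dvd K α hroot))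
    exact hζ.exists_eq_algebraMap_mul_of_pow_eq hα0 (by simpa [sub_eq_zero, hα] using hβ')
  choose! w hw0 hw using hconj
  have hcard : Multiset.card s = q.natDegree := by
    rw [← hmonic.natDegree_map (algebraMap K L), splits_iff_card_roots.mp hsplit]
  have hprod : s.prod = algebraMap K L (s.map w).prod * α ^ q.natDegree := by
    calc s.prod = (s.map fun β => algebraMap K L (w β) * α).prod := by
          rw [← Multiset.map_congr rfl hw, Multiset.map_id']
      _ = _ := by
          rw [Multiset.prod_map_mul, Multiset.map_const', Multiset.prod_replicate, hcard,
            ← Multiset.prod_hom, Multiset.map_map]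
          rfl
  have hcoeff : algebraMap K L (q.coeff 0) = (-1) ^ q.natDegree * s.prod := by
    rw [← coeff_map, hsplit.coeff_zero_eq_prod_roots_of_monic (hmonic.map _),
      hmonic.natDegree_map]
  have hW : algebraMap K L (s.map w).prod ≠ 0 :=
    (_root_.map_ne_zero _).mpr (Multiset.prod_ne_zero (by simpa using fun β hβ => hw0 β hβ))
  refine ⟨(-1) ^ q.natDegree * q.coeff 0 / (s.map w).prod, ?_⟩
  rw [map_div₀, map_mul, hcoeff, hprod, map_pow, map_neg, map_one, ← mul_assoc, ← mul_pow,
    neg_one_mul, neg_neg, one_pow, one_mul, mul_div_cancel_left₀ _ hW]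

end RootsOfUnity

theorem X_pow_sub_C_irreducible_of_isPrimitiveRoot {K : Type*} [Field K] {m : ℕ} (hm : 0 < m)
    {ζ : K} (hζ : IsPrimitiveRoot ζ m) {a : K} (ha : a ≠ 0)
    (hp : ∀ p : ℕ, p.Prime → p ∣ m → ∀ b : K, b ^ p ≠ a) :
    Irreducible (X ^ m - C a : K[X]) := by
  have : NeZero m := ⟨hm.ne'⟩
  let φ := algebraMap K (AlgebraicClosure K)
  obtain ⟨α, hα⟩ := IsAlgClosed.exists_pow_nat_eq (φ a) hm
  have hα0 : α ≠ 0 := by rintro rfl; exact ha (φ.injective (by simp [← hα, hm.ne']))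
  have hroot : aeval α (X ^ m - C a) = 0 := by simp [hα, φ]
  have hint : IsIntegral K α := ⟨_, monic_X_pow_sub_C a hm.ne', hroot⟩
  set r := (minpoly K α).natDegree
  obtain ⟨c, hc⟩ : α ^ Nat.gcd r m ∈ φ.fieldRange :=
    φ.fieldRange.pow_gcd_mem hα0 (hζ.pow_natDegree_minpoly_mem_fieldRange hα hα0) ⟨a, hα.symm⟩
  have hgcd : Nat.gcd r m = m := by
    obtain ⟨k, hk⟩ := Nat.gcd_dvd_right r m
    have hck : c ^ k = a := φ.injective (by rw [map_pow, hc, ← pow_mul, ← hk, hα])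
    by_contra hne
    obtain ⟨p, hp', hpk, b, hb⟩ :=
      exists_prime_dvd_pow_eq_of_pow_eq (by rintro rfl; exact hne (by simpa using hk.symm)) hck
    exact hp p hp' (hpk.trans (Dvd.intro_left _ hk.symm)) b hb
  have hmr : m ≤ r := Nat.le_of_dvd (minpoly.natDegree_pos hint) (hgcd ▸ Nat.gcd_dvd_left r m)
  rw [eq_of_monic_of_dvd_of_natDegree_le (minpoly.monic hint) (monic_X_pow_sub_C a hm.ne')
    (minpoly.dvd K α hroot) (by rwa [natDegree_X_pow_sub_C])]
  exact minpoly.irreducible hint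

theorem X_pow_mul_sub_C_eq_prod_nthRoots_one {K : Type*} [Field K] {d : ℕ} (hd : 0 < d)
    {ω : K} (hω : IsPrimitiveRoot ω d) {g f : K} (hg : g ^ d = f) (k : ℕ) :
    (X ^ (d * k) - C f : K[X]) = ((nthRoots d (1 : K)).map fun z => X ^ k - C (z * g)).prod := by
  have hcomp := congrArg (·.comp (X ^ k)) (X_pow_sub_C_eq_prod hω hd hg)
  simp only [sub_comp, pow_comp, X_comp, C_comp, prod_comp, ← pow_mul] at hcomp
  rw [mul_comm, hcomp, hω.nthRoots_eq (one_pow d), Multiset.map_map, Finset.prod_eq_multiset_prod]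
  simp

theorem stmt_6_general (K : Type*) [Field K] (n : ℕ) (hn : 0 < n)
    (hμ : ∃ ζ : K, IsPrimitiveRoot ζ n)
    (f : K) (hf : f ≠ 0) (d : ℕ) (g : K) (hg : g ^ d = f)
    (hmax : ∀ e : ℕ, e ∣ n → (∃ h : K, h ^ e = f) → e ≤ d)
    (n' : ℕ) (hn' : n = d * n') :
    (X ^ n - C f : K[X]) =
        ((Polynomial.nthRoots d (1 : K)).map (fun ζ => X ^ n' - C (ζ * g))).prod ∧
      (∀ ζ ∈ Polynomial.nthRoots d (1 : K), Irreducible (X ^ n' - C (ζ * g) : K[X])) ∧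
      ((Polynomial.nthRoots d (1 : K)).map (fun ζ => X ^ n' - C (ζ * g))).Nodup := by
  obtain ⟨ζ, hζ⟩ := hμ
  obtain ⟨hd, hn'0⟩ := CanonicallyOrderedAdd.mul_pos.mp (hn' ▸ hn)
  have hζd : IsPrimitiveRoot (ζ ^ n') d := hζ.pow hn (by rw [hn', mul_comm])
  have hg0 : g ≠ 0 := by rintro rfl; exact hf (by rw [← hg, zero_pow hd.ne'])
  refine ⟨hn' ▸ X_pow_mul_sub_C_eq_prod_nthRoots_one hd hζd hg n', ?_, ?_⟩
  · intro z hz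
    have hz1 : z ^ d = 1 := (mem_nthRoots hd).mp hz
    have hz0 : z ≠ 0 := by rintro rfl; simp [hd.ne'] at hz1
    refine X_pow_sub_C_irreducible_of_isPrimitiveRoot hn'0 (hζ.pow hn hn')
      (mul_ne_zero hz0 hg0) fun p hp ⟨s, hs⟩ b hb => ?_
    have hpd : p * d ≤ d := hmax (p * d) ⟨s, by rw [hn', hs]; ring⟩
      ⟨b, by rw [pow_mul, hb, mul_pow, hz1, one_mul, hg]⟩
    nlinarith [hp.two_le]
  · refine hζd.nthRoots_one_nodup.map fun z₁ z₂ h => ?_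
    exact mul_right_cancel₀ hg0 (C_inj.mp (sub_right_inj.mp h))

/-- Let `K` be a field with `char K ∤ n`, containing the `n` distinct `n`-th roots of unity
and a root of `T⁴ + 4`. Let `f ∈ Kˣ`, `d` the maximal divisor of `n` such that `T^d - f` has
a root `g` in `K`, and `n = d·n'`. Then `Tⁿ - f = ∏_{ζ ∈ μ_d(K)} (T^{n'} - ζg)` is the
factorization of `Tⁿ - f` into distinct irreducible factors in `K[T]`. -/
theorem stmt_6 (K : Type*) [Field K] (n : ℕ) (hn : 0 < n)
    (hchar : ¬ (ringChar K ∣ n)) (hμ : ∃ ζ : K, IsPrimitiveRoot ζ n)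
    (hy : ∃ y : K, y ^ 4 = -4)
    (f : K) (hf : f ≠ 0) (d : ℕ) (hd : d ∣ n) (g : K) (hg : g ^ d = f)
    (hmax : ∀ e : ℕ, e ∣ n → (∃ h : K, h ^ e = f) → e ≤ d)
    (n' : ℕ) (hn' : n = d * n') :
    (X ^ n - C f : K[X]) =
        ((Polynomial.nthRoots d (1 : K)).map (fun ζ => X ^ n' - C (ζ * g))).prod ∧
      (∀ ζ ∈ Polynomial.nthRoots d (1 : K), Irreducible (X ^ n' - C (ζ * g) : K[X])) ∧
      ((Polynomial.nthRoots d (1 : K)).map (fun ζ => X ^ n' - C (ζ * g))).Nodup :=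
  stmt_6_general K n hn hμ f hf d g hg hmax n' hn'
end

section
/- Let A ⊆ K be an integrally closed domain in a field K, containing μ_n(K) and the reciprocal of the Vandermonde determinant of some ordering of μ_n(K), with char K ∤ n. Let f ∈ K×. Then the integral closure of A in the ring K[T]/(T^n − f) equals ⊕_{i=0}^{n−1} {x ∈ K : x^n·f^i ∈ A}·t^i, where t is the class of T. -/
/-!
Write `t` for the class of `T`. Every element of `K[T]/(Tⁿ - f)` is of the form `α = ∑ cᵢ tⁱ`, and
the monomial `cᵢ tⁱ` is integral over `A` iff its `n`-th power `cᵢⁿ fⁱ ∈ K` is, i.e. iff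
`cᵢⁿ fⁱ ∈ A`; this gives `⊇`. Conversely, for each root of unity `ζ` the `K`-algebra
automorphism `t ↦ ζ t` preserves integrality, and the conjugates `∑ ζᵢʲ cⱼ tʲ` of `α` form the
product of the Vandermonde matrix of `(ζᵢ)` with the vector `(cⱼ tʲ)`. That matrix is invertible
over `A`, so each monomial `cⱼ tʲ` is an `A`-linear combination of integral elements.
-/

open Polynomial Matrix

theorem Finset.prod_filter_fst_lt_snd_eq_prod_prod_Ioi {ι β : Type*} [Fintype ι] [LinearOrder ι]
    [LocallyFiniteOrderTop ι] [CommMonoid β] (g : ι → ι → β) :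
    ∏ p ∈ univ.filter (fun p : ι × ι => p.1 < p.2), g p.1 p.2 = ∏ i, ∏ j ∈ Ioi i, g i j := by
  rw [prod_filter, ← univ_product_univ, prod_product' (f := fun i j => if i < j then g i j else 1)]
  refine prod_congr rfl fun i _ => ?_
  rw [← filter_lt_eq_Ioi, prod_filter]

theorem Matrix.isIntegral_of_isIntegral_mulVec {A R ι : Type*} [CommRing A] [CommRing R]
    [Algebra A R] [Fintype ι] [DecidableEq ι] {M : Matrix ι ι A} (hM : IsUnit M.det) {v : ι → R}
    (hv : ∀ i, IsIntegral A ((M.map (algebraMap A R) *ᵥ v) i)) (j : ι) : IsIntegral A (v j) := by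
  have : Invertible M := M.invertibleOfIsUnitDet hM
  have hv_eq : v = (⅟M).map (algebraMap A R) *ᵥ (M.map (algebraMap A R) *ᵥ v) := by
    rw [mulVec_mulVec, ← Matrix.map_mul, invOf_mul_self, Matrix.map_one _ (map_zero _) (map_one _),
      one_mulVec]
  rw [hv_eq]
  exact IsIntegral.sum _ fun i _ => (isIntegral_algebraMap).mul (hv i)

theorem Subring.isUnit_det_vandermonde {R : Type*} [CommRing R] {A : Subring R} {n : ℕ}
    {e : Fin n → A} {w : R} (hwA : w ∈ A)
    (hw : w * ∏ p ∈ Finset.univ.filter (fun p : Fin n × Fin n => p.1 < p.2),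
      ((e p.2 : R) - e p.1) = 1) :
    IsUnit (vandermonde e).det := by
  refine IsUnit.of_mul_eq_one (⟨w, hwA⟩ : A) (Subtype.ext ?_)
  have hmap : A.subtype.mapMatrix (vandermonde e) = vandermonde fun i => (e i : R) := by
    ext i j
    simp [vandermonde_apply]
  rw [Subring.coe_mul, mul_comm, ← Subring.coe_subtype, RingHom.map_det, hmap, det_vandermonde,
    ← Finset.prod_filter_fst_lt_snd_eq_prod_prod_Ioi (fun i j => (e j : R) - e i)]
  exact hw

namespace AdjoinRoot

variable {K : Type*} [Field K] {n : ℕ} {f : K}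

theorem nontrivial_X_pow_sub_C (hn : n ≠ 0) : Nontrivial (AdjoinRoot (X ^ n - C f)) :=
  AdjoinRoot.nontrivial _ (by rw [degree_X_pow_sub_C (Nat.pos_of_ne_zero hn)]; exact_mod_cast hn)

theorem exists_eq_sum_algebraMap_mul_root_pow (hn : n ≠ 0) (α : AdjoinRoot (X ^ n - C f)) :
    ∃ c : Fin n → K, α = ∑ i : Fin n,
      algebraMap K (AdjoinRoot (X ^ n - C f)) (c i) * root (X ^ n - C f) ^ (i : ℕ) := by
  have := nontrivial_X_pow_sub_C (f := f) hn
  obtain ⟨p, hp, rfl⟩ := (powerBasis' (monic_X_pow_sub_C f hn)).exists_eq_aeval α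
  rw [powerBasis'_dim, natDegree_X_pow_sub_C] at hp
  refine ⟨fun i => p.coeff i, ?_⟩
  rw [powerBasis'_gen, aeval_eq_sum_range' hp, ← Fin.sum_univ_eq_sum_range]
  simp only [Algebra.smul_def]

theorem algebraMap_mul_root_pow_pow (c : K) (i : ℕ) :
    (algebraMap K (AdjoinRoot (X ^ n - C f)) c * root (X ^ n - C f) ^ i) ^ n =
      algebraMap K (AdjoinRoot (X ^ n - C f)) (c ^ n * f ^ i) := by
  rw [mul_pow, ← pow_mul, mul_comm i n, pow_mul, root_X_pow_sub_C_pow, ← algebraMap_eq, map_mul,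
    map_pow, map_pow]

theorem isIntegral_algebraMap_mul_root_pow_iff {A : Type*} [CommRing A] [Algebra A K]
    (hn : 0 < n) (c : K) (i : ℕ) :
    IsIntegral A (algebraMap K (AdjoinRoot (X ^ n - C f)) c * root (X ^ n - C f) ^ i) ↔
      IsIntegral A (c ^ n * f ^ i) := by
  have := nontrivial_X_pow_sub_C (f := f) hn.ne'
  rw [← IsIntegral.pow_iff hn, algebraMap_mul_root_pow_pow]
  exact isIntegral_algHom_iff ((Algebra.ofId K _).restrictScalars A) (algebraMap K _).injective

theorem autAdjoinRootXPowSubC_algebraMap_mul_root_pow (η : rootsOfUnity n K) (c : K) (i : ℕ) :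
    autAdjoinRootXPowSubC n f η
        (algebraMap K (AdjoinRoot (X ^ n - C f)) c * root (X ^ n - C f) ^ i) =
      algebraMap K _ (((η : Kˣ) : K) ^ i * c) * root (X ^ n - C f) ^ i := by
  rw [map_mul, map_pow, AlgEquiv.commutes, autAdjoinRootXPowSubC_root, Algebra.smul_def, mul_pow,
    map_mul, map_pow]
  ring

theorem isIntegral_algebraMap_mul_root_pow_of_isIntegral_sum {A : Type*} [CommRing A]
    [Algebra A K] [NeZero n] {e : Fin n → A} (he : ∀ i, algebraMap A K (e i) ^ n = 1)
    (hdet : IsUnit (vandermonde e).det) {c : Fin n → K}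
    (hc : IsIntegral A (∑ i : Fin n,
      algebraMap K (AdjoinRoot (X ^ n - C f)) (c i) * root (X ^ n - C f) ^ (i : ℕ)))
    (j : Fin n) :
    IsIntegral A
      (algebraMap K (AdjoinRoot (X ^ n - C f)) (c j) * root (X ^ n - C f) ^ (j : ℕ)) := by
  refine isIntegral_of_isIntegral_mulVec (R := AdjoinRoot (X ^ n - C f)) hdet (v := fun j =>
    algebraMap K _ (c j) * root (X ^ n - C f) ^ (j : ℕ)) (fun i => ?_) j
  let σ := autAdjoinRootXPowSubC n f (rootsOfUnity.mkOfPowEq _ (he i))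
  convert hc.map (σ.toAlgHom.restrictScalars A) using 1
  simp only [mulVec, dotProduct, map_apply, vandermonde_apply, map_sum]
  refine Finset.sum_congr rfl fun j _ => ?_
  rw [AlgHom.restrictScalars_apply, AlgEquiv.coe_toAlgHom,
    autAdjoinRootXPowSubC_algebraMap_mul_root_pow, rootsOfUnity.coe_mkOfPowEq,
    IsScalarTower.algebraMap_apply A K, map_mul, map_pow, mul_assoc]

end AdjoinRoot

theorem stmt_9_general (K : Type*) [Field K] (A : Subring K) (n : ℕ) (hn : 0 < n)
    (hA : ∀ x : K, (A.subtype).IsIntegralElem x → x ∈ A)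
    (hμA : ∀ ζ : K, ζ ^ n = 1 → ζ ∈ A)
    (hvdm : ∃ e : Fin n → K, Function.Injective e ∧ (∀ i, (e i) ^ n = 1) ∧
      ∃ w ∈ A, w * ∏ p ∈ Finset.univ.filter (fun p : Fin n × Fin n => p.1 < p.2),
        (e p.2 - e p.1) = 1)
    (f : K) :
    ∀ α : AdjoinRoot (X ^ n - C f),
      ((algebraMap K (AdjoinRoot (X ^ n - C f))).comp A.subtype).IsIntegralElem α ↔
      ∃ c : Fin n → K, (∀ i : Fin n, c i ^ n * f ^ (i : ℕ) ∈ A) ∧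
        α = ∑ i : Fin n,
          algebraMap K (AdjoinRoot (X ^ n - C f)) (c i) * AdjoinRoot.root _ ^ (i : ℕ) := by
  intro α
  have : NeZero n := ⟨hn.ne'⟩
  obtain ⟨e, -, he, w, hwA, hw⟩ := hvdm
  let eA : Fin n → A := fun i => ⟨e i, hμA _ (he i)⟩
  have hdet : IsUnit (vandermonde eA).det := Subring.isUnit_det_vandermonde hwA hw
  constructor
  · intro hα
    obtain ⟨c, rfl⟩ := AdjoinRoot.exists_eq_sum_algebraMap_mul_root_pow hn.ne' α
    refine ⟨c, fun i => hA _ ((AdjoinRoot.isIntegral_algebraMap_mul_root_pow_iff hn _ _).1 ?_), rfl⟩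
    exact AdjoinRoot.isIntegral_algebraMap_mul_root_pow_of_isIntegral_sum (e := eA) he hdet hα i
  · rintro ⟨c, hc, rfl⟩
    exact IsIntegral.sum _ fun i _ => (AdjoinRoot.isIntegral_algebraMap_mul_root_pow_iff hn _ _).2
      (isIntegral_algebraMap (x := (⟨_, hc i⟩ : A)))

/-- Let `A ⊆ K` be a subring, integrally closed in `K`, containing the `n` distinct `n`-th
roots of unity of `K` and the reciprocal of the Vandermonde determinant of an ordering of
`μ_n(K)`, with `char K ∤ n`. Let `f ∈ Kˣ` and `t` the class of `T` in `K[T]/(Tⁿ - f)`. Then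
the integral closure of `A` in `K[T]/(Tⁿ - f)` equals `⊕_{i=0}^{n-1} {x ∈ K : xⁿfⁱ ∈ A}·tⁱ`. -/
theorem stmt_9 (K : Type*) [Field K] (A : Subring K) (n : ℕ) (hn : 0 < n)
    (hchar : ¬ (ringChar K ∣ n))
    (hA : ∀ x : K, (A.subtype).IsIntegralElem x → x ∈ A)
    (hμA : ∀ ζ : K, ζ ^ n = 1 → ζ ∈ A)
    (hvdm : ∃ e : Fin n → K, Function.Injective e ∧ (∀ i, (e i) ^ n = 1) ∧
      ∃ w ∈ A, w * ∏ p ∈ Finset.univ.filter (fun p : Fin n × Fin n => p.1 < p.2),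
        (e p.2 - e p.1) = 1)
    (f : K) (hf : f ≠ 0) :
    ∀ α : AdjoinRoot (X ^ n - C f),
      ((algebraMap K (AdjoinRoot (X ^ n - C f))).comp A.subtype).IsIntegralElem α ↔
      ∃ c : Fin n → K, (∀ i : Fin n, c i ^ n * f ^ (i : ℕ) ∈ A) ∧
        α = ∑ i : Fin n,
          algebraMap K (AdjoinRoot (X ^ n - C f)) (c i) * AdjoinRoot.root _ ^ (i : ℕ) :=
  stmt_9_general K A n hn hA hμA hvdm f
end

section
/- Let A ⊆ K be as above (integrally closed in K, containing μ_n(K) and the inverse of the Vandermonde determinant). An element x·t^i (x ∈ K, 0 ≤ i < n, t the class of T in K[T]/(T^n−f)) is integral over A if and only if x^n·f^i ∈ A. -/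
open Polynomial

private theorem aux_pow_integral {R S : Type*} [CommRing R] [CommRing S] (φ : R →+* S)
    {y : S} (hy : φ.IsIntegralElem y) (k : ℕ) (hk : 0 < k) : φ.IsIntegralElem (y ^ k) := by
  induction k with
  | zero => exact absurd hk (lt_irrefl 0)
  | succ m ih =>
    rcases Nat.eq_zero_or_pos m with hm | hm
    · simpa [hm] using hy
    · simpa [pow_succ] using (ih hm).mul φ hy

/-- Let `A ⊆ K` be a subring, integrally closed in `K`, containing `μ_n(K)` and the inverse of
the Vandermonde determinant of an ordering of `μ_n(K)`, with `char K ∤ n`, and `f ∈ Kˣ`. An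
element `x·tⁱ` (`x ∈ K`, `0 ≤ i < n`, `t` the class of `T` in `K[T]/(Tⁿ - f)`) is integral
over `A` if and only if `xⁿ·fⁱ ∈ A`. -/
theorem stmt_10 (K : Type*) [Field K] (A : Subring K) (n : ℕ) (hn : 0 < n)
    (hchar : ¬ (ringChar K ∣ n))
    (hA : ∀ x : K, (A.subtype).IsIntegralElem x → x ∈ A)
    (hμA : ∀ ζ : K, ζ ^ n = 1 → ζ ∈ A)
    (hvdm : ∃ e : Fin n → K, Function.Injective e ∧ (∀ i, (e i) ^ n = 1) ∧
      ∃ w ∈ A, w * ∏ p ∈ Finset.univ.filter (fun p : Fin n × Fin n => p.1 < p.2),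
        (e p.2 - e p.1) = 1)
    (f : K) (hf : f ≠ 0) (x : K) (i : ℕ) (hi : i < n) :
    ((algebraMap K (AdjoinRoot (X ^ n - C f))).comp A.subtype).IsIntegralElem
        (algebraMap K (AdjoinRoot (X ^ n - C f)) x * AdjoinRoot.root _ ^ i) ↔
      x ^ n * f ^ i ∈ A := by
  set g : K[X] := X ^ n - C f with hg
  set ι := algebraMap K (AdjoinRoot g) with hι
  have hdeg : g.degree = n := by
    rw [hg, sub_eq_add_neg]
    rw [Polynomial.degree_add_eq_left_of_degree_lt]
    · exact Polynomial.degree_X_pow n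
    · rw [Polynomial.degree_X_pow, Polynomial.degree_neg]
      exact lt_of_le_of_lt (Polynomial.degree_C_le) (by exact_mod_cast hn)
  have hnt : Nontrivial (AdjoinRoot g) := by
    refine AdjoinRoot.nontrivial g ?_
    rw [hdeg]; exact_mod_cast hn.ne'
  have hinj : Function.Injective ι := (ι : K →+* AdjoinRoot g).injective
  have hroot : AdjoinRoot.root g ^ n = ι f := by
    have h0 := AdjoinRoot.eval₂_root g
    rw [hg] at h0
    simp only [Polynomial.eval₂_sub, Polynomial.eval₂_pow, Polynomial.eval₂_X,
      Polynomial.eval₂_C] at h0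
    have h1 := sub_eq_zero.mp h0
    rw [hι, AdjoinRoot.algebraMap_eq]
    exact h1
  have hyn : (ι x * AdjoinRoot.root g ^ i) ^ n = ι (x ^ n * f ^ i) := by
    rw [mul_pow, ← pow_mul, mul_comm i n, pow_mul, hroot, ← map_pow, ← map_pow, ← map_mul]
  constructor
  · rintro ⟨p, pmon, hp⟩
    have hint : ((ι).comp A.subtype).IsIntegralElem ((ι x * AdjoinRoot.root g ^ i) ^ n) :=
      aux_pow_integral _ ⟨p, pmon, hp⟩ n hn
    rcases hint with ⟨q, qmon, hq⟩
    rw [hyn] at hq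
    refine hA _ ⟨q, qmon, hinj ?_⟩
    rw [map_zero, Polynomial.hom_eval₂]
    exact hq
  · intro h
    refine ⟨X ^ n - C (⟨x ^ n * f ^ i, h⟩ : A), monic_X_pow_sub_C _ hn.ne', ?_⟩
    simp only [Polynomial.eval₂_sub, Polynomial.eval₂_pow, Polynomial.eval₂_X,
      Polynomial.eval₂_C, RingHom.comp_apply]
    rw [hyn]
    exact sub_eq_zero.mpr rfl
end

section
/- Let A ⊆ K be an integrally closed subring of a field K containing μ_n(K) and the inverse of the Vandermonde determinant of an ordering of μ_n(K). If α = Σ_{i=0}^{n−1} x_i t^i ∈ K[T]/(T^n−f) is integral over A, then each summand x_i t^i is integral over A. -/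
/-!
For an `n`-th root of unity `ζ`, the substitution `t ↦ ζ t` is a `K`-algebra endomorphism of
`K[T]/(Tⁿ - f)`, so it maps the integral element `α = Σ xᵢ tⁱ` to the integral element
`Σ ζⁱ xᵢ tⁱ`. Taking `ζ` through the roots of unity `ζ₁, …, ζₙ`, the resulting vector is the
Vandermonde matrix `(ζⱼⁱ)` applied to `(xᵢ tⁱ)ᵢ`. That matrix has entries in `A` and its
determinant is a unit of `A`, so each `xᵢ tⁱ` is an `A`-linear combination of integral elements.
-/

open Polynomial Matrix

theorem Subalgebra.mem_of_mulVec_mem {A R ι : Type*} [CommRing A] [CommRing R] [Algebra A R]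
    [Fintype ι] [DecidableEq ι] (S : Subalgebra A R) {M : Matrix ι ι A} (hM : IsUnit M.det)
    {x : ι → R} (h : ∀ j, (M.map (algebraMap A R) *ᵥ x) j ∈ S) (i : ι) : x i ∈ S := by
  have hx : x = (M⁻¹).map (algebraMap A R) *ᵥ (M.map (algebraMap A R) *ᵥ x) := by
    rw [mulVec_mulVec, ← Matrix.map_mul, nonsing_inv_mul _ hM,
      Matrix.map_one _ (map_zero _) (map_one _), one_mulVec]
  rw [hx]
  exact S.sum_mem fun j _ => S.mul_mem (S.algebraMap_mem _) (h j)

theorem Matrix.det_vandermonde_eq_prod_lt {R : Type*} [CommRing R] {n : ℕ} (v : Fin n → R) :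
    (vandermonde v).det = ∏ p ∈ Finset.univ.filter (fun p : Fin n × Fin n => p.1 < p.2),
      (v p.2 - v p.1) := by
  rw [det_vandermonde, Finset.prod_filter, ← Finset.univ_product_univ, Finset.prod_product]
  refine Finset.prod_congr rfl fun i _ => ?_
  rw [← Finset.prod_filter]
  congr 1
  ext j
  simp

namespace AdjoinRoot

variable {K : Type*} [CommRing K] {n : ℕ} {f : K}

theorem root_pow_eq : root (X ^ n - C f) ^ n = of (X ^ n - C f) f := by
  have h := mk_self (f := X ^ n - C f)
  rwa [map_sub, map_pow, mk_X, mk_C, sub_eq_zero] at h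

noncomputable def scaleRoot (ζ : K) (hζ : ζ ^ n = 1) :
    AdjoinRoot (X ^ n - C f) →ₐ[K] AdjoinRoot (X ^ n - C f) :=
  liftAlgHom _ (Algebra.ofId K _) (of _ ζ * root _) <| by
    rw [eval₂_sub, eval₂_X_pow, eval₂_C, mul_pow, root_pow_eq, ← map_pow, hζ, map_one, one_mul]
    exact sub_self _

theorem scaleRoot_algebraMap_mul_root_pow (ζ : K) (hζ : ζ ^ n = 1) (c : K) (i : ℕ) :
    scaleRoot (f := f) ζ hζ (algebraMap K _ c * root _ ^ i) =
      algebraMap K _ (ζ ^ i) * (algebraMap K _ c * root _ ^ i) := by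
  rw [map_mul, map_pow, AlgHom.commutes, scaleRoot, liftAlgHom_root, mul_pow, ← map_pow]
  simp only [algebraMap_eq]
  ring

theorem isIntegral_algebraMap_mul_root_pow {A : Type*} [CommRing A] [Algebra A K]
    (ζ : Fin n → A) (hζ : ∀ j, ζ j ^ n = 1) (hdet : IsUnit (vandermonde ζ).det) (c : Fin n → K)
    (h : IsIntegral A
      (∑ i : Fin n, algebraMap K (AdjoinRoot (X ^ n - C f)) (c i) * root _ ^ (i : ℕ)))
    (i : Fin n) :
    IsIntegral A (algebraMap K (AdjoinRoot (X ^ n - C f)) (c i) * root _ ^ (i : ℕ)) := by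
  set x : Fin n → AdjoinRoot (X ^ n - C f) := fun i => algebraMap K _ (c i) * root _ ^ (i : ℕ)
  refine (integralClosure A _).mem_of_mulVec_mem hdet (x := x) (fun j => ?_) i
  have hζK : algebraMap A K (ζ j) ^ n = 1 := by rw [← map_pow, hζ, map_one]
  have hσ : (scaleRoot _ hζK).restrictScalars A (∑ i, x i) =
      ((vandermonde ζ).map (algebraMap A _) *ᵥ x) j := by
    simp only [x, AlgHom.restrictScalars_apply, map_sum, scaleRoot_algebraMap_mul_root_pow, mulVec,
      dotProduct, map_apply, vandermonde_apply, map_pow, ← IsScalarTower.algebraMap_apply]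
  rw [← hσ]
  exact h.map _

end AdjoinRoot

theorem stmt_11_general (K : Type*) [Field K] (A : Subring K) (n : ℕ)
    (hμA : ∀ ζ : K, ζ ^ n = 1 → ζ ∈ A)
    (hvdm : ∃ e : Fin n → K, Function.Injective e ∧ (∀ i, (e i) ^ n = 1) ∧
      ∃ w ∈ A, w * ∏ p ∈ Finset.univ.filter (fun p : Fin n × Fin n => p.1 < p.2),
        (e p.2 - e p.1) = 1)
    (f : K) (c : Fin n → K)
    (hint : ((algebraMap K (AdjoinRoot (X ^ n - C f))).comp A.subtype).IsIntegralElem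
      (∑ i : Fin n,
        algebraMap K (AdjoinRoot (X ^ n - C f)) (c i) * AdjoinRoot.root _ ^ (i : ℕ))) :
    ∀ i : Fin n, ((algebraMap K (AdjoinRoot (X ^ n - C f))).comp A.subtype).IsIntegralElem
      (algebraMap K (AdjoinRoot (X ^ n - C f)) (c i) * AdjoinRoot.root _ ^ (i : ℕ)) := by
  obtain ⟨e, -, he, w, hwA, hw⟩ := hvdm
  let ζ : Fin n → A := fun j => ⟨e j, hμA _ (he j)⟩
  have hdet : (⟨w, hwA⟩ : A) * (vandermonde ζ).det = 1 := by
    ext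
    push_cast [det_vandermonde_eq_prod_lt]
    exact hw
  exact AdjoinRoot.isIntegral_algebraMap_mul_root_pow ζ (fun j => Subtype.ext (he j))
    (.of_mul_eq_one_right _ hdet) c hint

/-- Let `A ⊆ K` be a subring, integrally closed in `K`, containing `μ_n(K)` and the inverse of
the Vandermonde determinant of an ordering of `μ_n(K)`, with `char K ∤ n`, and `f ∈ Kˣ`.
If `α = Σ_{i=0}^{n-1} xᵢ tⁱ ∈ K[T]/(Tⁿ - f)` is integral over `A`, then each summand `xᵢ tⁱ`
is integral over `A`. -/
theorem stmt_11 (K : Type*) [Field K] (A : Subring K) (n : ℕ) (hn : 0 < n)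
    (hchar : ¬ (ringChar K ∣ n))
    (hA : ∀ x : K, (A.subtype).IsIntegralElem x → x ∈ A)
    (hμA : ∀ ζ : K, ζ ^ n = 1 → ζ ∈ A)
    (hvdm : ∃ e : Fin n → K, Function.Injective e ∧ (∀ i, (e i) ^ n = 1) ∧
      ∃ w ∈ A, w * ∏ p ∈ Finset.univ.filter (fun p : Fin n × Fin n => p.1 < p.2),
        (e p.2 - e p.1) = 1)
    (f : K) (hf : f ≠ 0) (c : Fin n → K)
    (hint : ((algebraMap K (AdjoinRoot (X ^ n - C f))).comp A.subtype).IsIntegralElem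
      (∑ i : Fin n,
        algebraMap K (AdjoinRoot (X ^ n - C f)) (c i) * AdjoinRoot.root _ ^ (i : ℕ))) :
    ∀ i : Fin n, ((algebraMap K (AdjoinRoot (X ^ n - C f))).comp A.subtype).IsIntegralElem
      (algebraMap K (AdjoinRoot (X ^ n - C f)) (c i) * AdjoinRoot.root _ ^ (i : ℕ)) :=
  stmt_11_general K A n hμA hvdm f c hint
end

section
/- Let M be a lattice (free abelian group of finite rank), v ∈ M, n ≥ 1. Define n' as the positive generator of the subgroup {i ∈ ℤ : i·(v/n) ∈ M} of ℤ. If n' = n (i.e. (i/n)·v ∉ M for all 0 < i < n), then the inclusion of group algebras k[M] → k[M'] with M' = M + ℤ·(v/n) ⊂ M ⊗ ℚ satisfies the universal property of the n-th root of the unit χ^v: for every ring homomorphism g : k[M] → B and b ∈ B with b^n = g(χ^v), there is a unique extension g' : k[M'] → B with g'(χ^{v/n}) = b. -/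
/-!
Since `M'` is generated by `ι M` and `w`, it is the quotient of `M × ℤ` by the kernel of
`(m, i) ↦ ι m + i • w`; injectivity of `ι` and the primitivity of `w` force every element of that
kernel to be of the form `(-j • v, j * n)`. Hence a character `M → Bˣ` extends to `M'` as soon as
the image of `w` is an `n`-th root of the image of `v`, and `b` is a unit because `bⁿ` is. The ring
homomorphism is the linear extension of that character; it is unique because a ring
homomorphism out of `k[M']` is determined on `k` and on `χ^x` for `x` in a generating set.
-/

open AddMonoidAlgebra Function

section LatticeExtension

variable {M M' A : Type*} [AddCommGroup M] [AddCommGroup M'] [AddCommGroup A]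
  {ι : M →+ M'} {v : M} {n : ℕ} {w : M'}

theorem AddMonoidHom.coprod_zmultiplesHom_surjective
    (hgen : AddSubgroup.closure (Set.range ι ∪ {w}) = ⊤) :
    Surjective (ι.coprod (zmultiplesHom M' w)) := by
  rw [← AddMonoidHom.range_eq_top, eq_top_iff, ← hgen, AddSubgroup.closure_le]
  rintro x (⟨m, rfl⟩ | rfl)
  · exact ⟨(m, 0), by simp⟩
  · exact ⟨(0, 1), by simp⟩

theorem AddMonoidHom.ker_coprod_zmultiplesHom_le (hι : Injective ι) (hw : n • w = ι v)
    (hprim : ∀ i : ℤ, (∃ m : M, i • w = ι m) → (n : ℤ) ∣ i) (u : M →+ A) {a : A}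
    (ha : n • a = u v) :
    (ι.coprod (zmultiplesHom M' w)).ker ≤ (u.coprod (zmultiplesHom A a)).ker := by
  rintro ⟨m, i⟩ hker
  have hker : ι m + i • w = 0 := hker
  obtain ⟨j, rfl⟩ := hprim i ⟨-m, by rw [map_neg, eq_neg_of_add_eq_zero_right hker]⟩
  have hm : m = -(j • v) := hι <| by
    rw [map_neg, map_zsmul, ← hw, ← natCast_zsmul, ← mul_smul, mul_comm]
    exact eq_neg_of_add_eq_zero_left hker
  show u m + ((n : ℤ) * j) • a = 0
  rw [hm, mul_comm, mul_smul, natCast_zsmul, ha, map_neg, map_zsmul, neg_add_cancel]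

theorem AddMonoidHom.exists_comp_eq_of_nsmul_eq (hι : Injective ι) (hw : n • w = ι v)
    (hgen : AddSubgroup.closure (Set.range ι ∪ {w}) = ⊤)
    (hprim : ∀ i : ℤ, (∃ m : M, i • w = ι m) → (n : ℤ) ∣ i) (u : M →+ A) {a : A}
    (ha : n • a = u v) :
    ∃ φ : M' →+ A, φ.comp ι = u ∧ φ w = a := by
  set π := ι.coprod (zmultiplesHom M' w)
  set ψ : {ψ : M × ℤ →+ A // π.ker ≤ ψ.ker} :=
    ⟨u.coprod (zmultiplesHom A a), ker_coprod_zmultiplesHom_le hι hw hprim u ha⟩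
  have hφ := π.liftOfRightInverse_comp_apply _ (rightInverse_surjInv
    (coprod_zmultiplesHom_surjective hgen)) ψ
  refine ⟨π.liftOfSurjective (coprod_zmultiplesHom_surjective hgen) ψ,
    AddMonoidHom.ext fun m => ?_, ?_⟩
  · simpa [π, ψ] using hφ (m, 0)
  · simpa [π, ψ] using hφ (0, 1)

end LatticeExtension

namespace AddMonoidAlgebra

variable {k G G' B : Type*} [Semiring k]

theorem exists_ringHom_comp_mapDomainRingHom [AddMonoid G] [AddMonoid G'] [CommSemiring B]
    (g : k[G] →+* B) (ι : G →+ G') (χ : Multiplicative G' →* B)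
    (hχ : ∀ m, χ (.ofAdd (ι m)) = g (single m 1)) :
    ∃ g' : k[G'] →+* B,
      g'.comp (mapDomainRingHom k ι) = g ∧ ∀ x, g' (single x 1) = χ (.ofAdd x) := by
  refine ⟨liftNCRingHom (g.comp singleZeroRingHom) χ fun _ _ => .all _ _, ringHom_ext ?_ ?_, ?_⟩
  · simp [liftNCRingHom_single]
  · simp [liftNCRingHom_single, hχ, ← one_def]
  · simp [liftNCRingHom_single, ← one_def]

theorem ringHom_ext_of_closure_eq_top [AddGroup G] [Semiring B] {s : Set G}
    (hs : AddSubgroup.closure s = ⊤) {f₁ f₂ : k[G] →+* B}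
    (h₀ : ∀ r, f₁ (single 0 r) = f₂ (single 0 r)) (h : ∀ x ∈ s, f₁ (single x 1) = f₂ (single x 1)) :
    f₁ = f₂ := by
  exact ringHom_ext h₀ fun x => DFunLike.congr_fun (AddMonoidHom.eq_of_eqOn_dense hs
    (f := MonoidHom.toAdditiveRight ((f₁ : k[G] →* B).comp (of k G)))
    (g := MonoidHom.toAdditiveRight ((f₂ : k[G] →* B).comp (of k G))) h) x

theorem ringHom_ext_of_comp_mapDomainRingHom [AddMonoid G] [AddGroup G'] [Semiring B]
    {ι : G →+ G'} {w : G'}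
    (hgen : AddSubgroup.closure (Set.range ι ∪ {w}) = ⊤) {f₁ f₂ : k[G'] →+* B}
    (hι : f₁.comp (mapDomainRingHom k ι) = f₂.comp (mapDomainRingHom k ι))
    (hw : f₁ (single w 1) = f₂ (single w 1)) : f₁ = f₂ := by
  have hsingle (m : G) (r : k) : f₁ (single (ι m) r) = f₂ (single (ι m) r) := by
    simpa using DFunLike.congr_fun hι (single m r)
  refine ringHom_ext_of_closure_eq_top hgen (by simpa using hsingle 0) ?_
  rintro x (⟨m, rfl⟩ | rfl)
  exacts [hsingle m 1, hw]

end AddMonoidAlgebra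

theorem stmt_13_general (k : Type*) [Field k]
    (M M' : Type*) [AddCommGroup M] [AddCommGroup M']
    (ι : M →+ M') (hι : Function.Injective ι)
    (v : M) (n : ℕ) (hn : 0 < n)
    (w : M') (hw : n • w = ι v)
    (hgen : AddSubgroup.closure (Set.range ι ∪ {w}) = ⊤)
    (hprim : ∀ i : ℤ, (∃ m : M, i • w = ι m) → (n : ℤ) ∣ i)
    (B : Type*) [CommRing B] (g : AddMonoidAlgebra k M →+* B)
    (b : B) (hb : b ^ n = g (AddMonoidAlgebra.single v 1)) :
    ∃! g' : AddMonoidAlgebra k M' →+* B,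
      g'.comp (AddMonoidAlgebra.mapDomainRingHom k ι) = g ∧
        g' (AddMonoidAlgebra.single w 1) = b := by
  set u : M →+ Additive Bˣ := MonoidHom.toAdditiveRight ((g : k[M] →* B).comp (of k M)).toHomUnits
  have hu (m : M) : ((u m).toMul : B) = g (single m 1) := rfl
  obtain ⟨c, rfl⟩ : IsUnit b := (isUnit_pow_iff hn.ne').1 (hb ▸ hu v ▸ (u v).toMul.isUnit)
  have hc : n • Additive.ofMul c = u v := Additive.toMul.injective <| Units.ext <| by simp [hu, hb]
  obtain ⟨φ, hφι, hφw⟩ := AddMonoidHom.exists_comp_eq_of_nsmul_eq hι hw hgen hprim u hc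
  obtain ⟨g', hg'ι, hg'⟩ := exists_ringHom_comp_mapDomainRingHom g ι
    ((Units.coeHom B).comp (MonoidHom.toAdditiveRight.symm φ)) fun m => by simp [← hu, ← hφι]
  refine ⟨g', ⟨hg'ι, by simp [hg', hφw]⟩, fun g'' ⟨hg''ι, hg''w⟩ => ?_⟩
  exact ringHom_ext_of_comp_mapDomainRingHom hgen (hg''ι.trans hg'ι.symm)
    (by simp [hg''w, hg', hφw])

/-- Let `M` be a lattice, `v ∈ M`, `n ≥ 1`, and let `M'` be the lattice `M + ℤ·(v/n)`
(encoded abstractly: `ι : M →+ M'` injective, `w ∈ M'` with `n•w = ι v`, `M'` generated by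
`ι(M)` and `w`). Assume `n' = n`, i.e. `i•(v/n) ∈ M` only when `n ∣ i`. Then the inclusion of
group algebras `k[M] → k[M']` satisfies the universal property of the `n`-th root of the unit
`χ^v`: for every ring homomorphism `g : k[M] → B` and `b ∈ B` with `bⁿ = g(χ^v)`, there is a
unique extension `g' : k[M'] → B` with `g'(χ^{v/n}) = b`. -/
theorem stmt_13 (k : Type*) [Field k]
    (M M' : Type*) [AddCommGroup M] [AddCommGroup M']
    [Module.Free ℤ M] [Module.Finite ℤ M]
    (ι : M →+ M') (hι : Function.Injective ι)
    (v : M) (n : ℕ) (hn : 0 < n)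
    (w : M') (hw : n • w = ι v)
    (hgen : AddSubgroup.closure (Set.range ι ∪ {w}) = ⊤)
    (hprim : ∀ i : ℤ, (∃ m : M, i • w = ι m) → (n : ℤ) ∣ i)
    (B : Type*) [CommRing B] (g : AddMonoidAlgebra k M →+* B)
    (b : B) (hb : b ^ n = g (AddMonoidAlgebra.single v 1)) :
    ∃! g' : AddMonoidAlgebra k M' →+* B,
      g'.comp (AddMonoidAlgebra.mapDomainRingHom k ι) = g ∧
        g' (AddMonoidAlgebra.single w 1) = b :=
  stmt_13_general k M M' ι hι v n hn w hw hgen hprim B g b hb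
end

section
/- Let f : X → S be a proper morphism of schemes, U ⊆ X and V ⊆ S open dense subsets with f(U) ⊆ V. Then the induced morphism g : U → V is proper if and only if U = f^{-1}(V). -/
/-!
If `g : U ⟶ V` is proper, then so is the open immersion `U ⟶ f⁻¹ V` through which it factors,
because `f⁻¹ V ⟶ V` is separated. Its image is then closed in `f⁻¹ V`, and also dense since `U`
is dense in `X`; hence `U = f⁻¹ V`. Conversely `f⁻¹ V ⟶ V` is a base change of `f`.
-/

open AlgebraicGeometry

namespace AlgebraicGeometry.Scheme

lemma range_homOfLE {X : Scheme} {U W : X.Opens} (e : U ≤ W) :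
    Set.range (X.homOfLE e).base = W.ι.base ⁻¹' U := by
  ext y
  refine ⟨?_, fun hy ↦ ⟨⟨y.1, hy⟩, homOfLE_apply' e y.1 hy⟩⟩
  rintro ⟨u, rfl⟩
  change (X.homOfLE e u).1 ∈ U
  exact (homOfLE_apply e u).symm ▸ u.2

lemma Opens.eq_of_dense_of_isClosedMap_homOfLE {X : Scheme} {U W : X.Opens} (e : U ≤ W)
    (hU : Dense (U : Set X)) (hclosed : IsClosedMap (X.homOfLE e).base) : U = W := by
  refine le_antisymm e fun x hx ↦ ?_
  have hdense : Dense (Set.range (X.homOfLE e).base) := by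
    rw [range_homOfLE]
    exact hU.preimage W.ι.isOpenEmbedding.isOpenMap
  have hall : Set.range (X.homOfLE e).base = Set.univ :=
    hclosed.isClosed_range.closure_eq ▸ hdense.closure_eq
  exact (range_homOfLE e ▸ hall ▸ Set.mem_univ _ : (⟨x, hx⟩ : W.toScheme) ∈ W.ι.base ⁻¹' U)

end AlgebraicGeometry.Scheme

theorem stmt_14_general {X S : Scheme} (f : X ⟶ S) [IsProper f]
    (U : X.Opens) (V : S.Opens) (hU : Dense (U : Set X))
    (hUV : U ≤ f ⁻¹ᵁ V) :
    IsProper (f.resLE V U hUV) ↔ U = f ⁻¹ᵁ V := by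
  have hres : IsProper (f.resLE V (f ⁻¹ᵁ V) le_rfl) := by
    rw [Scheme.Hom.resLE_eq_morphismRestrict]
    infer_instance
  constructor
  · intro hg
    rw [← Scheme.Hom.map_resLE f le_rfl hUV] at hg
    have : IsProper (X.homOfLE hUV) := .of_comp _ (f.resLE V (f ⁻¹ᵁ V) le_rfl)
    exact Scheme.Opens.eq_of_dense_of_isClosedMap_homOfLE hUV hU (X.homOfLE hUV).isClosedMap
  · rintro rfl
    exact hres

/-- Let `f : X → S` be a proper morphism of schemes, `U ⊆ X` and `V ⊆ S` open dense subsets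
with `f(U) ⊆ V`. Then the induced morphism `g : U → V` is proper iff `U = f⁻¹(V)`. -/
theorem stmt_14 {X S : Scheme} (f : X ⟶ S) [IsProper f]
    (U : X.Opens) (V : S.Opens) (hU : Dense (U : Set X)) (hV : Dense (V : Set S))
    (hUV : U ≤ f ⁻¹ᵁ V) :
    IsProper (f.resLE V U hUV) ↔ U = f ⁻¹ᵁ V :=
  stmt_14_general f U V hU hUV
end
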